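/- arXiv:1104.0941 — 7 statements merged into one kernel-verified Lean document; each statement's English description precedes it below -/
import Mathlib

section
/- For d = 2 and d = 3, for every probability vector p of length d and every permutation σ, one has 1 − |∑_j λ_j p_{σ(j)}|^2 = (d/(d−1))(1 − ∑_j p_j^2), where λ_j are the stellar spectrum eigenvalues λ_j = exp(iπ(d−2j+1)/d). In particular the stellar mirror entanglement equals the linear entropy for local dimension 2 and 3. -/
/-!
For `d = 2, 3` the stellar eigenvalues form a regular simplex on the unit circle:
`Re(λ_j λ̄_k) = cos(2π(k - j)/d) = -1/(d-1)` for `j ≠ k`. For unit vectors with constant pairwise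
overlap `c`, expanding the square gives `|∑ λ_j q_j|² = (1 - c) ∑ q_j² + c (∑ q_j)²`, and with
`c = -1/(d-1)` and `∑ q_j = 1` this is `(d ∑ q_j² - 1)/(d-1)`, which does not depend on the order
of the `q_j`.
-/

open Complex Real

open ComplexConjugate

theorem sq_norm_sum_mul_ofReal_of_re_mul_conj_eq_ite {ι : Type*} [Fintype ι] [DecidableEq ι]
    (w : ι → ℂ) (c : ℝ) (hw : ∀ j k, (w j * conj (w k)).re = if j = k then 1 else c)
    (q : ι → ℝ) :
    ‖∑ j, w j * q j‖ ^ 2 = (1 - c) * ∑ j, q j ^ 2 + c * (∑ j, q j) ^ 2 := by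
  have hgram : ∀ j k, (w j * conj (w k)).re = c + (1 - c) * if j = k then 1 else 0 := by
    intro j k
    rw [hw]
    split_ifs <;> ring
  rw [Complex.sq_norm, ← Complex.ofReal_re (normSq _), ← Complex.mul_conj, map_sum,
    Finset.sum_mul_sum, Complex.re_sum]
  simp only [Complex.re_sum, map_mul, Complex.conj_ofReal]
  calc ∑ j, ∑ k, (w j * q j * (conj (w k) * q k)).re
      = ∑ j, ∑ k, q j * q k * (c + (1 - c) * if j = k then 1 else 0) := by
        refine Finset.sum_congr rfl fun j _ => Finset.sum_congr rfl fun k _ => ?_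
        rw [← hgram, show w j * q j * (conj (w k) * q k) = (q j * q k : ℝ) * (w j * conj (w k)) by
          push_cast; ring, Complex.re_ofReal_mul]
    _ = ∑ j, ∑ k, q j * q k * c + ∑ j, q j * q j * (1 - c) := by
        simp only [mul_add, mul_ite, mul_one, mul_zero, Finset.sum_add_distrib, Finset.sum_ite_eq,
          Finset.mem_univ, if_true]
    _ = (1 - c) * ∑ j, q j ^ 2 + c * (∑ j, q j) ^ 2 := by
        simp only [← Finset.sum_mul, ← Finset.mul_sum, ← sq]
        ring

noncomputable def stellarEigenvalue (d : ℕ) (j : Fin d) : ℂ :=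
  exp (I * (π * ((d : ℝ) - 2 * ((j : ℕ) + 1) + 1) / d))

theorem stellarEigenvalue_mul_conj (d : ℕ) (j k : Fin d) :
    stellarEigenvalue d j * conj (stellarEigenvalue d k) =
      exp ((2 * π * (((k : ℕ) : ℝ) - (j : ℕ)) / d : ℝ) * I) := by
  rw [stellarEigenvalue, stellarEigenvalue, ← Complex.exp_conj, ← Complex.exp_add]
  congr 1
  simp only [map_mul, Complex.conj_I, map_div₀, map_sub, map_add, map_one, map_ofNat,
    Complex.conj_ofReal, map_natCast]
  push_cast
  ring

theorem re_stellarEigenvalue_mul_conj (d : ℕ) (j k : Fin d) :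
    (stellarEigenvalue d j * conj (stellarEigenvalue d k)).re =
      Real.cos (2 * π * (((k : ℕ) : ℝ) - (j : ℕ)) / d) := by
  rw [stellarEigenvalue_mul_conj, Complex.exp_ofReal_mul_I_re]

theorem cos_two_pi_div_three : Real.cos (2 * π / 3) = -1 / 2 := by
  rw [show 2 * π / 3 = π - π / 3 by ring, Real.cos_pi_sub, Real.cos_pi_div_three]
  ring

theorem cos_four_pi_div_three : Real.cos (2 * π * 2 / 3) = -1 / 2 := by
  rw [show 2 * π * 2 / 3 = 2 * π - 2 * π / 3 by ring, Real.cos_two_pi_sub, cos_two_pi_div_three]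

theorem re_stellarEigenvalue_mul_conj_eq_ite {d : ℕ} (hd : d = 2 ∨ d = 3) (j k : Fin d) :
    (stellarEigenvalue d j * conj (stellarEigenvalue d k)).re =
      if j = k then 1 else -1 / ((d : ℝ) - 1) := by
  rw [re_stellarEigenvalue_mul_conj]
  rcases hd with rfl | rfl <;> fin_cases j <;> fin_cases k <;>
    norm_num [neg_div, cos_two_pi_div_three, cos_four_pi_div_three]

theorem stellar_equals_linear_entropy_d2_d3_general (d : ℕ) (hd : d = 2 ∨ d = 3)
    (p : Fin d → ℝ) (hsum : ∑ j, p j = 1)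
    (lam : Fin d → ℂ)
    (hlam : ∀ j : Fin d,
      lam j = Complex.exp (Complex.I * (π * ((d : ℝ) - 2 * ((j : ℕ) + 1) + 1) / d)))
    (σ : Equiv.Perm (Fin d)) :
    1 - ‖∑ j, lam j * (p (σ j) : ℂ)‖ ^ 2 =
      ((d : ℝ) / (d - 1)) * (1 - ∑ j, (p j) ^ 2) := by
  obtain rfl : lam = stellarEigenvalue d := funext hlam
  have hd1 : (d : ℝ) - 1 ≠ 0 := by
    rcases hd with rfl | rfl <;> norm_num
  rw [sq_norm_sum_mul_ofReal_of_re_mul_conj_eq_ite _ _ (re_stellarEigenvalue_mul_conj_eq_ite hd)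
    fun j => p (σ j), Equiv.sum_comp σ p, Equiv.sum_comp σ fun j => p j ^ 2, hsum]
  field_simp
  ring

/-- For local dimension `d = 2` or `d = 3`, for every probability vector `p` and every
permutation `σ`, `1 − |∑_j λ_j p_{σ(j)}|² = (d/(d−1))(1 − ∑_j p_j²)`, where `λ_j` are
the stellar spectrum eigenvalues. In particular the stellar mirror entanglement equals
the linear entropy in these dimensions. -/
theorem stellar_equals_linear_entropy_d2_d3 (d : ℕ) (hd : d = 2 ∨ d = 3)
    (p : Fin d → ℝ) (hp : ∀ j, 0 ≤ p j) (hsum : ∑ j, p j = 1)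
    (lam : Fin d → ℂ)
    (hlam : ∀ j : Fin d,
      lam j = Complex.exp (Complex.I * (π * ((d : ℝ) - 2 * ((j : ℕ) + 1) + 1) / d)))
    (σ : Equiv.Perm (Fin d)) :
    1 - ‖∑ j, lam j * (p (σ j) : ℂ)‖ ^ 2 =
      ((d : ℝ) / (d - 1)) * (1 - ∑ j, (p j) ^ 2) :=
  stellar_equals_linear_entropy_d2_d3_general d hd p hsum lam hlam σ
end

section
/- The stellar mirror entanglement is bounded above by the linear entropy: for every probability vector p of length d (d ≥ 2), min over permutations σ of (1 − |∑_j ω^j p_{σ(j)}|^2) ≤ (d/(d−1))(1 − ∑_j p_j^2), where ω = e^{2πi/d}. -/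
/-!
Average over all permutations. Since `Perm (Fin d)` acts 2-transitively, the averaged Gram
matrix `∑ σ, p (σ m) * p (σ n)` has one value on the diagonal and one off it, both fixed by
`∑ p` and `∑ p ^ 2`; expanding `‖∑ j, p (σ j) • ω ^ j‖ ^ 2` against it, with `‖ω ^ j‖ = 1` and
`∑ ω ^ j = 0`, shows that the mean of `1 - ‖∑ j, ω ^ j * p (σ j)‖ ^ 2` over `σ` is exactly the
rescaled linear entropy, so some `σ` lies at or below it.
-/

open Complex Real Finset
open scoped RealInnerProductSpace

namespace Equiv.Perm

variable {ι M : Type*} [Fintype ι] [DecidableEq ι] [AddCommMonoid M]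

theorem sum_comp_apply_eq (g : ι → M) (i k : ι) :
    ∑ σ : Perm ι, g (σ i) = ∑ σ : Perm ι, g (σ k) := by
  rw [← Equiv.sum_comp (Equiv.mulRight (swap i k)) (fun σ => g (σ k))]
  simp

theorem sum_comp_apply_apply_eq_of_ne (g : ι → ι → M) {i j k l : ι} (hij : i ≠ j)
    (hkl : k ≠ l) : ∑ σ : Perm ι, g (σ i) (σ j) = ∑ σ : Perm ι, g (σ k) (σ l) := by
  obtain ⟨τ, hτk, hτl⟩ :=
    MulAction.is_two_pretransitive_iff.mp (isMultiplyPretransitive ι 2) hkl hij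
  rw [Perm.smul_def] at hτk hτl
  rw [← Equiv.sum_comp (Equiv.mulRight τ) (fun σ => g (σ k) (σ l))]
  simp only [coe_mulRight, mul_apply, hτk, hτl]

theorem card_smul_sum_comp_apply (g : ι → M) (i : ι) :
    Fintype.card ι • ∑ σ : Perm ι, g (σ i) = Fintype.card (Perm ι) • ∑ a, g a := by
  calc Fintype.card ι • ∑ σ : Perm ι, g (σ i)
      = ∑ k, ∑ σ : Perm ι, g (σ k) := by
        rw [← card_univ, ← sum_const]
        exact sum_congr rfl fun k _ => sum_comp_apply_eq g i k
    _ = Fintype.card (Perm ι) • ∑ a, g a := by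
        rw [sum_comm, ← card_univ, ← sum_const]
        exact sum_congr rfl fun σ _ => Equiv.sum_comp σ g

theorem card_mul_sum_comp_apply_mul_apply {R : Type*} [CommRing R] (q : ι → R) {i j : ι}
    (hij : i ≠ j) :
    Fintype.card ι * (Fintype.card ι - 1) * ∑ σ : Perm ι, q (σ i) * q (σ j) =
      Fintype.card (Perm ι) * ((∑ a, q a) ^ 2 - ∑ a, q a ^ 2) := by
  have hrow : ∑ k, ∑ σ : Perm ι, q (σ i) * q (σ k) = (∑ a, q a) * ∑ σ : Perm ι, q (σ i) := by
    rw [sum_comm, mul_sum]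
    refine sum_congr rfl fun σ _ => ?_
    rw [← mul_sum, Equiv.sum_comp σ q, mul_comm]
  have hsplit : ∑ k, ∑ σ : Perm ι, q (σ i) * q (σ k) =
      ∑ σ : Perm ι, q (σ i) ^ 2 + (Fintype.card ι - 1) * ∑ σ : Perm ι, q (σ i) * q (σ j) := by
    rw [← add_sum_erase _ _ (mem_univ i), sum_congr rfl fun k hk =>
      sum_comp_apply_apply_eq_of_ne (fun a b => q a * q b) (ne_of_mem_erase hk).symm hij,
      sum_const, card_erase_of_mem (mem_univ i), card_univ, nsmul_eq_mul,
      Nat.cast_pred (Fintype.card_pos_iff.mpr ⟨i⟩)]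
    simp only [sq]
  have hmean := card_smul_sum_comp_apply q i
  have hsq := card_smul_sum_comp_apply (q · ^ 2) i
  simp only [nsmul_eq_mul] at hmean hsq
  linear_combination (Fintype.card ι : R) * hsplit.symm.trans hrow + (∑ a, q a) * hmean - hsq

theorem sum_norm_sq_sum_smul {E : Type*} [NormedAddCommGroup E] [InnerProductSpace ℝ E]
    (f : ι → E) (q : ι → ℝ) {i j : ι} (hij : i ≠ j) :
    ∑ σ : Perm ι, ‖∑ k, q (σ k) • f k‖ ^ 2 =
      (∑ σ : Perm ι, q (σ i) ^ 2) * ∑ k, ‖f k‖ ^ 2 +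
        (∑ σ : Perm ι, q (σ i) * q (σ j)) * (‖∑ k, f k‖ ^ 2 - ∑ k, ‖f k‖ ^ 2) := by
  set D := ∑ σ : Perm ι, q (σ i) ^ 2
  set O := ∑ σ : Perm ι, q (σ i) * q (σ j)
  have hgram (k l : ι) : ∑ σ : Perm ι, q (σ k) * q (σ l) = if k = l then D else O := by
    split_ifs with hkl
    · simp only [hkl, ← sq]
      exact sum_comp_apply_eq (q · ^ 2) l i
    · exact sum_comp_apply_apply_eq_of_ne (fun a b => q a * q b) hkl hij
  have hnorm_sum : ‖∑ k, f k‖ ^ 2 = ∑ k, ∑ l, ⟪f k, f l⟫ := by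
    rw [← real_inner_self_eq_norm_sq, sum_inner]
    simp only [inner_sum]
  calc ∑ σ : Perm ι, ‖∑ k, q (σ k) • f k‖ ^ 2
      = ∑ σ : Perm ι, ∑ k, ∑ l, q (σ k) * q (σ l) * ⟪f k, f l⟫ := by
        refine sum_congr rfl fun σ _ => ?_
        rw [← real_inner_self_eq_norm_sq, sum_inner]
        simp only [inner_sum, real_inner_smul_left, real_inner_smul_right]
        exact sum_congr rfl fun k _ => sum_congr rfl fun l _ => by ring
    _ = ∑ k, ∑ l, (if k = l then D else O) * ⟪f k, f l⟫ := by
        simp only [← hgram, sum_mul]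
        rw [sum_comm]
        exact sum_congr rfl fun k _ => sum_comm
    _ = O * ∑ k, ∑ l, ⟪f k, f l⟫ + (D - O) * ∑ k, ⟪f k, f k⟫ := by
        simp only [mul_sum, ← sum_add_distrib]
        refine sum_congr rfl fun k _ => ?_
        rw [← Fintype.sum_ite_eq k (fun l => (D - O) * ⟪f k, f l⟫), ← sum_add_distrib]
        refine sum_congr rfl fun l _ => ?_
        split_ifs <;> ring
    _ = D * ∑ k, ‖f k‖ ^ 2 + O * (‖∑ k, f k‖ ^ 2 - ∑ k, ‖f k‖ ^ 2) := by
        simp only [hnorm_sum, real_inner_self_eq_norm_sq]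
        ring

theorem card_mul_sum_norm_sq_sum_smul [Nontrivial ι] {E : Type*} [NormedAddCommGroup E]
    [InnerProductSpace ℝ E] (f : ι → E) (q : ι → ℝ) :
    Fintype.card ι * (Fintype.card ι - 1) * ∑ σ : Perm ι, ‖∑ k, q (σ k) • f k‖ ^ 2 =
      Fintype.card (Perm ι) * ((Fintype.card ι - 1) * (∑ k, q k ^ 2) * ∑ k, ‖f k‖ ^ 2 +
        ((∑ k, q k) ^ 2 - ∑ k, q k ^ 2) * (‖∑ k, f k‖ ^ 2 - ∑ k, ‖f k‖ ^ 2)) := by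
  obtain ⟨i, j, hij⟩ := exists_pair_ne ι
  have hdiag := card_smul_sum_comp_apply (q · ^ 2) i
  rw [nsmul_eq_mul, nsmul_eq_mul] at hdiag
  rw [sum_norm_sq_sum_smul f q hij]
  linear_combination ((Fintype.card ι - 1) * ∑ k, ‖f k‖ ^ 2) * hdiag +
    (‖∑ k, f k‖ ^ 2 - ∑ k, ‖f k‖ ^ 2) * card_mul_sum_comp_apply_mul_apply q hij

end Equiv.Perm

theorem norm_exp_two_pi_I_mul_div (x : ℝ) (n : ℕ) : ‖Complex.exp (2 * π * I * x / n)‖ = 1 := by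
  rw [show 2 * π * I * x / n = ((2 * π * x / n : ℝ) : ℂ) * I by push_cast; ring,
    norm_exp_ofReal_mul_I]

theorem sum_exp_two_pi_I_mul_div_eq_zero {n : ℕ} (hn : 1 < n) :
    ∑ k : Fin n, Complex.exp (2 * π * I * (k.val : ℝ) / n) = 0 := by
  rw [← (isPrimitiveRoot_exp n (by omega)).geom_sum_eq_zero hn, ← Fin.sum_univ_eq_sum_range]
  refine sum_congr rfl fun k _ => ?_
  rw [← Complex.exp_nat_mul]
  push_cast
  ring_nf

theorem stellar_le_linear_entropy_general (d : ℕ) (hd : 2 ≤ d)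
    (p : Fin d → ℝ) (hsum : ∑ j, p j = 1) :
    ∃ σ : Equiv.Perm (Fin d),
      1 - (‖∑ j : Fin d,
          Complex.exp (2 * π * Complex.I * (j.val : ℝ) / d) * (p (σ j) : ℂ)‖) ^ 2 ≤
        ((d : ℝ) / (d - 1)) * (1 - ∑ j, (p j) ^ 2) := by
  have : Nontrivial (Fin d) := Fin.nontrivial_iff_two_le.mpr hd
  have havg := Equiv.Perm.card_mul_sum_norm_sq_sum_smul
    (fun j : Fin d => Complex.exp (2 * π * I * (j.val : ℝ) / d)) p
  simp only [norm_exp_two_pi_I_mul_div, sum_exp_two_pi_I_mul_div_eq_zero hd, hsum, norm_zero,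
    one_pow, sum_const, card_univ, Fintype.card_fin, nsmul_eq_mul, mul_one, Complex.real_smul,
    mul_comm (p _ : ℂ)] at havg
  have hmean : ∑ σ : Equiv.Perm (Fin d),
      (1 - ‖∑ j : Fin d, Complex.exp (2 * π * I * (j.val : ℝ) / d) * (p (σ j) : ℂ)‖ ^ 2) =
        ∑ _σ : Equiv.Perm (Fin d), (d : ℝ) / (d - 1) * (1 - ∑ j, p j ^ 2) := by
    rw [sum_sub_distrib, sum_const, sum_const, card_univ, nsmul_eq_mul, nsmul_eq_mul, mul_one]
    have hd0 : (d : ℝ) ≠ 0 := by positivity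
    have hd1 : (d : ℝ) - 1 ≠ 0 := by
      rw [sub_ne_zero, Nat.cast_ne_one]
      omega
    field_simp
    exact mul_left_cancel₀ hd0 (by linear_combination -havg)
  obtain ⟨σ, -, hσ⟩ := exists_le_of_sum_le univ_nonempty hmean.le
  exact ⟨σ, hσ⟩

/-- The stellar mirror entanglement is bounded above by the linear entropy:
`min_σ (1 − |∑_j ω^j p_{σ(j)}|²) ≤ (d/(d−1))(1 − ∑_j p_j²)`. -/
theorem stellar_le_linear_entropy (d : ℕ) (hd : 2 ≤ d)
    (p : Fin d → ℝ) (hp : ∀ j, 0 ≤ p j) (hsum : ∑ j, p j = 1) :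
    ∃ σ : Equiv.Perm (Fin d),
      1 - (‖∑ j : Fin d,
          Complex.exp (2 * π * Complex.I * (j.val : ℝ) / d) * (p (σ j) : ℂ)‖) ^ 2 ≤
        ((d : ℝ) / (d - 1)) * (1 - ∑ j, (p j) ^ 2) :=
  stellar_le_linear_entropy_general d hd p hsum
end

section
/- For d ≥ 2 and the vector λ ∈ ℂ^d with λ_j = exp(2πij/d), the sum over all permutation matrices σ of σᵀ (Re λλ†) σ equals d!·(d/(d−1)) times the orthogonal projection onto the hyperplane orthogonal to the all-ones vector: ∑_{σ ∈ S_d} σᵀ Re(λλ†) σ = d!·(d/(d−1))·(I − (1/d) J), where J is the all-ones matrix. -/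
/-!
Conjugating `M` by every permutation matrix and summing gives a matrix `F` that is invariant under
simultaneous permutation of rows and columns, so it has one value on the diagonal and one value
off it. The trace and the total entry sum of `F` are `d!` times those of `M = Re(λλ†)`, namely
`d` (as `|λ_j| = 1`) and `|∑ λ_j|² = 0`; these two linear conditions determine the two values.
-/

open Matrix Complex Real
open Equiv Finset

namespace Matrix

variable {n R : Type*}

section PermInvariant

variable [DecidableEq n] {A : Matrix n n R} (hA : ∀ τ : Perm n, ∀ i j, A (τ i) (τ j) = A i j)
include hA

theorem diag_eq_of_perm_invariant (i k : n) : A i i = A k k := by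
  simpa using (hA (Equiv.swap i k) i i).symm

theorem offDiag_eq_of_perm_invariant {i j k l : n} (hij : i ≠ j) (hkl : k ≠ l) :
    A i j = A k l := by
  -- `swap i k` sends `i` to `k`; then `swap j' l` sends the image `j'` of `j` to `l`, fixing `k`.
  set j' := Equiv.swap i k j with hj'
  have hj'k : j' ≠ k := by
    rw [hj', Ne, swap_apply_eq_iff, swap_apply_right]
    exact hij.symm
  have hτi : (Equiv.swap j' l * Equiv.swap i k) i = k := by
    rw [Perm.mul_apply, swap_apply_left, swap_apply_of_ne_of_ne hj'k.symm hkl]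
  have hτj : (Equiv.swap j' l * Equiv.swap i k) j = l := by
    rw [Perm.mul_apply, ← hj', swap_apply_left]
  simpa [hτi, hτj] using (hA (Equiv.swap j' l * Equiv.swap i k) i j).symm

theorem trace_eq_card_smul_of_perm_invariant [Fintype n] [AddCommMonoid R] (i : n) :
    A.trace = Fintype.card n • A i i := by
  simp only [trace, diag_apply, diag_eq_of_perm_invariant hA _ i, sum_const, card_univ]

theorem sum_row_eq_of_perm_invariant [Fintype n] [AddCommMonoid R] {i j : n} (hij : i ≠ j)
    (k : n) : ∑ l, A k l = A i i + (Fintype.card n - 1) • A i j := by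
  rw [← add_sum_erase univ _ (mem_univ k), diag_eq_of_perm_invariant hA k i,
    sum_congr rfl fun l hl => offDiag_eq_of_perm_invariant hA (ne_of_mem_erase hl).symm hij,
    sum_const, card_erase_of_mem (mem_univ k), card_univ]

end PermInvariant

variable [Fintype n] [DecidableEq n]

def permConjSum [NonAssocSemiring R] (M : Matrix n n R) : Matrix n n R :=
  ∑ σ : Perm n, (σ.permMatrix R)ᵀ * M * σ.permMatrix R

theorem transpose_permMatrix_mul_mul_permMatrix [NonAssocSemiring R] (σ : Perm n)
    (M : Matrix n n R) :
    (σ.permMatrix R)ᵀ * M * σ.permMatrix R = M.submatrix σ.symm σ.symm := by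
  rw [transpose_permMatrix, PEquiv.toMatrix_toPEquiv_mul, PEquiv.mul_toMatrix_toPEquiv,
    submatrix_submatrix]
  rfl

theorem permConjSum_apply [NonAssocSemiring R] (M : Matrix n n R) (i j : n) :
    M.permConjSum i j = ∑ σ : Perm n, M (σ i) (σ j) := by
  simp only [permConjSum, sum_apply, transpose_permMatrix_mul_mul_permMatrix, submatrix_apply]
  exact Equiv.sum_comp (Equiv.inv (Perm n)) fun σ : Perm n => M (σ i) (σ j)

theorem permConjSum_apply_perm [NonAssocSemiring R] (M : Matrix n n R) (τ : Perm n) (i j : n) :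
    M.permConjSum (τ i) (τ j) = M.permConjSum i j := by
  simp only [permConjSum_apply]
  exact Equiv.sum_comp (Equiv.mulRight τ) fun σ : Perm n => M (σ i) (σ j)

theorem trace_permConjSum [NonAssocSemiring R] (M : Matrix n n R) :
    M.permConjSum.trace = (Fintype.card n).factorial • M.trace := by
  simp only [trace, diag_apply, permConjSum_apply]
  rw [sum_comm, ← Fintype.card_perm, ← card_univ, ← sum_const]
  exact sum_congr rfl fun σ _ => Equiv.sum_comp σ fun i => M i i

theorem sum_sum_permConjSum [NonAssocSemiring R] (M : Matrix n n R) :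
    ∑ i, ∑ j, M.permConjSum i j = (Fintype.card n).factorial • ∑ i, ∑ j, M i j := by
  have hσ (σ : Perm n) : ∑ i, ∑ j, M (σ i) (σ j) = ∑ i, ∑ j, M i j := by
    rw [Equiv.sum_comp σ fun i => ∑ j, M i (σ j)]
    exact sum_congr rfl fun i _ => Equiv.sum_comp σ (M i)
  simp only [permConjSum_apply]
  rw [← Fintype.card_perm, ← card_univ, ← sum_const, ← sum_congr rfl fun σ _ => hσ σ]
  conv_rhs => rw [sum_comm]
  exact sum_congr rfl fun _ _ => sum_comm

theorem permConjSum_eq_of_trace_of_sum [Field R] [CharZero R] (M : Matrix n n R)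
    (hn : 2 ≤ Fintype.card n) (htr : M.trace = Fintype.card n)
    (hsum : ∑ i, ∑ j, M i j = 0) :
    M.permConjSum = (((Fintype.card n).factorial : R) * (Fintype.card n / (Fintype.card n - 1))) •
      (1 - (1 / Fintype.card n : R) • of fun _ _ => (1 : R)) := by
  set d := Fintype.card n
  have hd : (d : R) ≠ 0 := by norm_cast; omega
  have hd1 : (d : R) - 1 ≠ 0 := by
    rw [sub_ne_zero]; norm_cast; omega
  have hF := M.permConjSum_apply_perm
  have hdiag (i : n) : M.permConjSum i i = d.factorial := by
    have htrF := M.trace_permConjSum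
    rw [trace_eq_card_smul_of_perm_invariant hF i, htr, nsmul_eq_mul, nsmul_eq_mul] at htrF
    exact mul_left_cancel₀ hd (htrF.trans (mul_comm _ _))
  have hoff {i j : n} (hij : i ≠ j) : M.permConjSum i j = -d.factorial / (d - 1) := by
    have htot := M.sum_sum_permConjSum
    rw [hsum, smul_zero, sum_congr rfl fun k _ => sum_row_eq_of_perm_invariant hF hij k,
      sum_const, card_univ, hdiag, nsmul_eq_mul, nsmul_eq_mul, Nat.cast_sub (by omega)] at htot
    have hrow : (d.factorial : R) + (d - 1) * M.permConjSum i j = 0 := by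
      exact_mod_cast (mul_eq_zero.mp htot).resolve_left hd
    rw [eq_div_iff hd1]
    linear_combination hrow
  ext i j
  rcases eq_or_ne i j with rfl | hij
  · simp only [hdiag, smul_apply, sub_apply, one_apply_eq, of_apply, smul_eq_mul]
    field_simp
  · simp only [hoff hij, smul_apply, sub_apply, one_apply_ne hij, of_apply, smul_eq_mul]
    field_simp
    ring

end Matrix

theorem IsPrimitiveRoot.sum_pow_succ_eq_zero {K : Type*} [CommRing K] [IsDomain K] {ζ : K}
    {k : ℕ} (hζ : IsPrimitiveRoot ζ k) (hk : 1 < k) : ∑ j : Fin k, ζ ^ (j.val + 1) = 0 := by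
  simp only [pow_succ', ← mul_sum, Fin.sum_univ_eq_sum_range (ζ ^ ·), hζ.geom_sum_eq_zero hk,
    mul_zero]

theorem Complex.sum_sum_re_mul_conj_eq_normSq {ι : Type*} [Fintype ι] (v : ι → ℂ) :
    ∑ i, ∑ j, (v i * starRingEnd ℂ (v j)).re = normSq (∑ i, v i) := by
  rw [← ofReal_re (normSq _), ← mul_conj, map_sum, sum_mul_sum, re_sum]
  simp only [re_sum]

/-- Schur-lemma identity: `∑_{σ ∈ S_d} σᵀ Re(λλ†) σ = d!·(d/(d−1))·(I − (1/d)J)` for the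
stellar spectrum `λ_j = e^{2πij/d}`, where `J` is the all-ones matrix. -/
theorem sum_perm_conj_stellar_projector (d : ℕ) (hd : 2 ≤ d)
    (lam : Fin d → ℂ)
    (hlam : ∀ j : Fin d, lam j = Complex.exp (2 * π * Complex.I * ((j.val : ℝ) + 1) / d))
    (M : Matrix (Fin d) (Fin d) ℝ)
    (hM : ∀ i j, M i j = (lam i * (starRingEnd ℂ) (lam j)).re) :
    ∑ σ : Equiv.Perm (Fin d), (σ.permMatrix ℝ)ᵀ * M * σ.permMatrix ℝ =
      ((d.factorial : ℝ) * ((d : ℝ) / (d - 1))) •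
        ((1 : Matrix (Fin d) (Fin d) ℝ) - ((1 : ℝ) / d) • Matrix.of fun _ _ => (1 : ℝ)) := by
  have hd0 : d ≠ 0 := by omega
  have hζ := Complex.isPrimitiveRoot_exp d hd0
  have hlam_pow (j : Fin d) : lam j = Complex.exp (2 * π * Complex.I / d) ^ (j.val + 1) := by
    rw [hlam, ← Complex.exp_nat_mul]
    congr 1
    push_cast
    ring
  have hdiag (i : Fin d) : M i i = 1 := by
    rw [hM, Complex.mul_conj', hlam_pow, norm_pow, hζ.norm'_eq_one hd0]
    simp
  have hlam_sum : ∑ j, lam j = 0 := by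
    simp only [hlam_pow]
    exact hζ.sum_pow_succ_eq_zero hd
  have htr : M.trace = Fintype.card (Fin d) := by
    simp [trace, hdiag]
  have hsum : ∑ i, ∑ j, M i j = 0 := by
    simp only [hM, Complex.sum_sum_re_mul_conj_eq_normSq, hlam_sum, map_zero]
  simpa only [Fintype.card_fin, permConjSum] using
    M.permConjSum_eq_of_trace_of_sum (by simpa only [Fintype.card_fin]) htr hsum
end

section
/- Let p be a probability vector of length d with at most 2 nonzero entries, say values t and 1−t. Then for the stellar spectrum ω^j = e^{2πij/d}, min over permutations σ of (1 − |∑_j ω^j p_{σ(j)}|^2) = 4 sin²(π/d) t(1−t). -/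
open Complex Real

/-!
Only the two occupied positions `a = σ⁻¹ i`, `b = σ⁻¹ j` contribute, and
`1 - |ω^a t + ω^b (1 - t)|² = 4 sin²(π (a - b) / d) t (1 - t)`. Since `0 < |a - b| < d`,
the angle `π |a - b| / d` lies in `[π/d, π - π/d]`, where `sin` is at least `sin (π/d)`;
adjacent positions attain this bound.
-/

theorem norm_sq_exp_mul_add_exp_mul (α β a b : ℝ) :
    ‖exp (α * I) * a + exp (β * I) * b‖ ^ 2 = a ^ 2 + b ^ 2 + 2 * a * b * Real.cos (α - β) := by
  rw [Complex.sq_norm, Complex.normSq_apply]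
  simp only [add_re, add_im, mul_re, mul_im, exp_ofReal_mul_I_re, exp_ofReal_mul_I_im,
    ofReal_re, ofReal_im, mul_zero, sub_zero, Real.cos_sub]
  nlinarith [Real.sin_sq_add_cos_sq α, Real.sin_sq_add_cos_sq β]

theorem one_sub_norm_sq_exp_mul_add_exp_mul (α β t : ℝ) :
    1 - ‖exp (α * I) * t + exp (β * I) * ((1 - t : ℝ) : ℂ)‖ ^ 2
      = 4 * Real.sin ((α - β) / 2) ^ 2 * (t * (1 - t)) := by
  rw [norm_sq_exp_mul_add_exp_mul, Real.sin_sq_eq_half_sub, mul_div_cancel₀ _ two_ne_zero]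
  ring

theorem Fintype.sum_mul_comp_perm_of_support_pair {ι R : Type*} [Fintype ι] [DecidableEq ι]
    [CommSemiring R] {f g : ι → R} {i j : ι} (hij : i ≠ j) (hg : ∀ k, k ≠ i → k ≠ j → g k = 0)
    (σ : Equiv.Perm ι) :
    ∑ k, f k * g (σ k) = f (σ.symm i) * g i + f (σ.symm j) * g j := by
  rw [← σ.symm.sum_comp]
  simp only [Equiv.apply_symm_apply]
  exact Fintype.sum_eq_add i j hij fun k hk => by rw [hg k hk.1 hk.2, mul_zero]

theorem Equiv.Perm.exists_apply_eq_and_apply_eq {α : Type*} [DecidableEq α] {a b c e : α}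
    (hab : a ≠ b) (hce : c ≠ e) : ∃ σ : Equiv.Perm α, σ a = c ∧ σ b = e := by
  have hb : Equiv.swap a c b ≠ c := by
    rw [Ne, Equiv.swap_apply_eq_iff, Equiv.swap_apply_right]; exact hab.symm
  refine ⟨Equiv.swap (Equiv.swap a c b) e * Equiv.swap a c, ?_, ?_⟩
  · rw [Equiv.Perm.mul_apply, Equiv.swap_apply_left, Equiv.swap_apply_of_ne_of_ne hb.symm hce]
  · rw [Equiv.Perm.mul_apply, Equiv.swap_apply_left]

theorem Real.sin_pi_div_le_sin {d : ℕ} (hd : 2 ≤ d) {x : ℝ} (h1 : π / d ≤ x) (h2 : x ≤ π - π / d) :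
    Real.sin (π / d) ≤ Real.sin x := by
  have hpd : 0 < π / d := by positivity
  have hpd2 : π / d ≤ π / 2 := by
    gcongr
    exact_mod_cast hd
  rcases le_total x (π / 2) with hx | hx
  · exact Real.strictMonoOn_sin.monotoneOn ⟨by linarith, hpd2⟩ ⟨by linarith, hx⟩ h1
  · rw [← Real.sin_pi_sub x]
    exact Real.strictMonoOn_sin.monotoneOn ⟨by linarith, hpd2⟩ ⟨by linarith, by linarith⟩
      (by linarith)

theorem Real.sin_sq_pi_div_le_sin_sq_of_ne {d : ℕ} {a b : Fin d} (hab : a ≠ b) :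
    Real.sin (π / d) ^ 2 ≤ Real.sin (π * ((a : ℝ) - b) / d) ^ 2 := by
  wlog hlt : b < a generalizing a b
  · have := this hab.symm (lt_of_le_of_ne (not_lt.mp hlt) hab)
    rwa [← neg_sub, mul_neg, neg_div, Real.sin_neg, neg_sq]
  have hd : 2 ≤ d := by omega
  have hd0 : (0 : ℝ) < d := by positivity
  have hgap : (1 : ℝ) ≤ (a : ℝ) - b := by
    have : ((b : ℕ) : ℝ) + 1 ≤ (a : ℕ) := by exact_mod_cast hlt
    linarith
  have hspan : (a : ℝ) - b ≤ d - 1 := by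
    have : ((a : ℕ) : ℝ) + 1 ≤ d := by exact_mod_cast a.isLt
    linarith [(b.val.cast_nonneg : (0 : ℝ) ≤ b)]
  have hlo : π / d ≤ π * ((a : ℝ) - b) / d := by
    gcongr; nlinarith [Real.pi_pos]
  have hhi : π * ((a : ℝ) - b) / d ≤ π - π / d := by
    rw [div_le_iff₀ hd0, sub_mul, div_mul_cancel₀ _ hd0.ne']
    nlinarith [Real.pi_pos]
  have hsin0 : 0 ≤ Real.sin (π / d) :=
    Real.sin_nonneg_of_nonneg_of_le_pi (by positivity) (div_le_self Real.pi_pos.le (by linarith))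
  exact pow_le_pow_left₀ hsin0 (Real.sin_pi_div_le_sin hd hlo hhi) 2

theorem one_sub_norm_sq_sum_exp_mul_comp_perm {d : ℕ} {t : ℝ} {p : Fin d → ℝ} {i j : Fin d}
    (hij : i ≠ j) (hpi : p i = t) (hpj : p j = 1 - t) (hp : ∀ k, k ≠ i → k ≠ j → p k = 0)
    (σ : Equiv.Perm (Fin d)) :
    1 - ‖∑ k : Fin d, exp (2 * π * I * (k.val : ℝ) / d) * (p (σ k) : ℂ)‖ ^ 2
      = 4 * Real.sin (π * ((σ.symm i : ℝ) - σ.symm j) / d) ^ 2 * (t * (1 - t)) := by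
  have hexp (k : Fin d) : exp (2 * π * I * (k.val : ℝ) / d) = exp (↑(2 * π * k / d) * I) := by
    push_cast; ring_nf
  rw [Fintype.sum_mul_comp_perm_of_support_pair (g := fun k => (p k : ℂ)) hij
      (fun k hki hkj => by simp only [hp k hki hkj, ofReal_zero]),
    hexp, hexp, hpi, hpj, one_sub_norm_sq_exp_mul_add_exp_mul]
  ring_nf

theorem stellar_of_rank_two_general (d : ℕ) (t : ℝ) (ht0 : 0 ≤ t) (ht1 : t ≤ 1)
    (p : Fin d → ℝ)
    (hsupp : ∃ i j : Fin d, i ≠ j ∧ p i = t ∧ p j = 1 - t ∧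
      ∀ k, k ≠ i → k ≠ j → p k = 0) :
    IsLeast {x : ℝ | ∃ σ : Equiv.Perm (Fin d),
        x = 1 - (‖∑ j : Fin d,
          Complex.exp (2 * π * Complex.I * (j.val : ℝ) / d) * (p (σ j) : ℂ)‖) ^ 2}
      (4 * Real.sin (π / d) ^ 2 * (t * (1 - t))) := by
  obtain ⟨i, j, hij, hpi, hpj, hp⟩ := hsupp
  have hd : 2 ≤ d := by
    have := Fin.val_ne_of_ne hij
    omega
  have value := one_sub_norm_sq_sum_exp_mul_comp_perm hij hpi hpj hp
  constructor
  · obtain ⟨σ, hσi, hσj⟩ := Equiv.Perm.exists_apply_eq_and_apply_eq hij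
      (show (⟨0, by omega⟩ : Fin d) ≠ ⟨1, by omega⟩ by simp)
    refine ⟨σ.symm, ?_⟩
    rw [value, Equiv.symm_symm, hσi, hσj]
    norm_num [neg_div, Real.sin_neg]
  · rintro _ ⟨σ, rfl⟩
    rw [value]
    gcongr 4 * ?_ * _
    exact Real.sin_sq_pi_div_le_sin_sq_of_ne (σ.symm.injective.ne hij)

/-- For a probability vector supported on at most two coordinates, with values `t` and
`1−t`, the stellar mirror entanglement equals `4 sin²(π/d) t(1−t)`. -/
theorem stellar_of_rank_two (d : ℕ) (hd : 2 ≤ d) (t : ℝ) (ht0 : 0 ≤ t) (ht1 : t ≤ 1)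
    (p : Fin d → ℝ) (hp : ∀ j, 0 ≤ p j) (hsum : ∑ j, p j = 1)
    (hsupp : ∃ i j : Fin d, i ≠ j ∧ p i = t ∧ p j = 1 - t ∧
      ∀ k, k ≠ i → k ≠ j → p k = 0) :
    IsLeast {x : ℝ | ∃ σ : Equiv.Perm (Fin d),
        x = 1 - (‖∑ j : Fin d,
          Complex.exp (2 * π * Complex.I * (j.val : ℝ) / d) * (p (σ j) : ℂ)‖) ^ 2}
      (4 * Real.sin (π / d) ^ 2 * (t * (1 - t))) :=
  stellar_of_rank_two_general d t ht0 ht1 p hsupp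
end

section
/- Let ρ be a d×d density matrix and Λ = {λ_1,…,λ_d} a fixed multiset of unimodular complex numbers. Then the maximum of |Tr(W ρ)| over all unitary W with spectrum Λ is attained at a W that commutes with ρ; moreover this maximum equals max over permutations σ of |∑_i λ_{σ(i)} p_i| where p_i are the eigenvalues of ρ. -/
/-!
Write `ρ = U diag(p) U†` and `W = V diag(λ) V†`. With the unitary `A = U† V`,
`Tr(W ρ) = ∑ᵢⱼ |Aᵢⱼ|² λⱼ pᵢ`, and `(|Aᵢⱼ|²)` is doubly stochastic. By Birkhoff's theorem
`Tr(W ρ)` is then a convex combination of the sums `∑ᵢ λ_{σ i} pᵢ`, so its modulus is at most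
the largest of their moduli. That largest value is attained by `W = U diag(λ ∘ σ) U†`, which
commutes with `ρ`.
-/

open Matrix Equiv
open scoped ComplexOrder

lemma Unitary.conj_mul_conj {M : Type*} [Monoid M] [StarMul M] {U : M} (hU : U ∈ unitary M)
    (X Y : M) : U * X * star U * (U * Y * star U) = U * (X * Y) * star U := by
  calc U * X * star U * (U * Y * star U) = U * X * (star U * U) * Y * star U := by
        simp only [mul_assoc]
    _ = U * (X * Y) * star U := by rw [Unitary.star_mul_self_of_mem hU, mul_one, mul_assoc U]

lemma Commute.unitary_conj {M : Type*} [Monoid M] [StarMul M] {U X Y : M} (hU : U ∈ unitary M)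
    (h : Commute X Y) : Commute (U * X * star U) (U * Y * star U) := by
  rw [Commute, SemiconjBy, Unitary.conj_mul_conj hU, Unitary.conj_mul_conj hU, h.eq]

namespace Matrix

variable {n : Type*} [Fintype n]

lemma trace_mul_conj_mul_conj {R : Type*} [CommSemiring R] [StarRing R] (U V X Y : Matrix n n R) :
    (V * X * star V * (U * Y * star U)).trace =
      (star U * V * X * star (star U * V) * Y).trace := by
  simp only [star_mul, star_star, mul_assoc]
  rw [trace_mul_comm (star U)]
  simp only [mul_assoc]

variable [DecidableEq n]

lemma permMatrix_mem_unitaryGroup {R : Type*} [CommRing R] [StarRing R] (σ : Perm n) :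
    σ.permMatrix R ∈ unitaryGroup n R := by
  rw [mem_unitaryGroup_iff, star_eq_conjTranspose, conjTranspose_permMatrix, ← permMatrix_mul,
    inv_mul_cancel, permMatrix_one]

lemma permMatrix_mul_diagonal_mul_star {R : Type*} [CommRing R] [StarRing R] (σ : Perm n)
    (l : n → R) :
    σ.permMatrix R * diagonal l * star (σ.permMatrix R) = diagonal (l ∘ σ) := by
  ext i j
  simp [star_eq_conjTranspose, PEquiv.toMatrix_toPEquiv_mul, PEquiv.mul_toMatrix_toPEquiv,
    diagonal_apply, Perm.inv_def, σ.injective.eq_iff]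

lemma norm_sum_smul_le_of_mem_doublyStochastic {E : Type*} [SeminormedAddCommGroup E]
    [NormedSpace ℝ E] {B : Matrix n n ℝ} (hB : B ∈ doublyStochastic ℝ n) (f : n → n → E)
    {M : ℝ} (hM : ∀ σ : Perm n, ‖∑ i, f i (σ i)‖ ≤ M) :
    ‖∑ i, ∑ j, B i j • f i j‖ ≤ M := by
  let L : Matrix n n ℝ →ₗ[ℝ] E :=
    { toFun := fun B => ∑ i, ∑ j, B i j • f i j
      map_add' := by intros; simp [add_smul, Finset.sum_add_distrib]
      map_smul' := by intros; simp [Finset.smul_sum, smul_smul] }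
  have hperm : {σ.permMatrix ℝ | σ : Perm n} ⊆ L ⁻¹' Metric.closedBall 0 M := by
    rintro _ ⟨σ, rfl⟩
    simpa [L, PEquiv.toMatrix_apply, ite_smul] using hM σ
  have := convexHull_min hperm ((convex_closedBall 0 M).linear_preimage L)
  rw [← doublyStochastic_eq_convexHull_permMatrix] at this
  simpa [L] using this hB

variable {𝕜 : Type*} [RCLike 𝕜]

lemma of_norm_sq_mem_doublyStochastic {A : Matrix n n 𝕜} (hA : A ∈ unitaryGroup n 𝕜) :
    of (fun i j => ‖A i j‖ ^ 2) ∈ doublyStochastic ℝ n := by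
  refine mem_doublyStochastic_iff_sum.2 ⟨fun _ _ => sq_nonneg _, fun i => ?_, fun j => ?_⟩
  · have := congr_fun₂ (mem_unitaryGroup_iff.1 hA) i i
    simp only [mul_apply, star_apply, RCLike.star_def, RCLike.mul_conj, one_apply_eq] at this
    exact_mod_cast this
  · have := congr_fun₂ (mem_unitaryGroup_iff'.1 hA) j j
    simp only [mul_apply, star_apply, RCLike.star_def, RCLike.conj_mul, one_apply_eq] at this
    exact_mod_cast this

lemma trace_mul_diagonal_mul_star_mul_diagonal (A : Matrix n n 𝕜) (l q : n → 𝕜) :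
    (A * diagonal l * star A * diagonal q).trace = ∑ i, ∑ j, ‖A i j‖ ^ 2 • (l j * q i) := by
  simp only [trace, diag_apply, mul_apply, diagonal_apply, mul_ite, mul_zero,
    Finset.sum_ite_eq', Finset.mem_univ, if_true, star_apply, Finset.sum_mul]
  refine Finset.sum_congr rfl fun i _ => Finset.sum_congr rfl fun j _ => ?_
  rw [RCLike.real_smul_eq_coe_mul, RCLike.ofReal_pow, ← RCLike.mul_conj, RCLike.star_def]
  ring

theorem norm_trace_conj_diagonal_mul_conj_diagonal_le {U V : Matrix n n 𝕜}
    (hU : U ∈ unitaryGroup n 𝕜) (hV : V ∈ unitaryGroup n 𝕜) (l q : n → 𝕜) {M : ℝ}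
    (hM : ∀ σ : Perm n, ‖∑ i, l (σ i) * q i‖ ≤ M) :
    ‖(V * diagonal l * star V * (U * diagonal q * star U)).trace‖ ≤ M := by
  rw [trace_mul_conj_mul_conj, trace_mul_diagonal_mul_star_mul_diagonal]
  exact norm_sum_smul_le_of_mem_doublyStochastic
    (of_norm_sq_mem_doublyStochastic (mul_mem (Unitary.star_mem hU) hV)) _ hM

lemma trace_conj_diagonal_mul_conj_diagonal {U : Matrix n n 𝕜} (hU : U ∈ unitaryGroup n 𝕜)
    (l q : n → 𝕜) :
    (U * diagonal l * star U * (U * diagonal q * star U)).trace = ∑ i, l i * q i := by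
  rw [trace_mul_conj_mul_conj, Unitary.star_mul_self_of_mem hU, one_mul, star_one, mul_one,
    diagonal_mul_diagonal, trace_diagonal]

end Matrix

theorem max_abs_trace_fixed_spectrum_general (d : ℕ) (ρ : Matrix (Fin d) (Fin d) ℂ)
    (p : Fin d → ℝ)
    (hdiag : ∃ U ∈ Matrix.unitaryGroup (Fin d) ℂ,
      ρ = U * Matrix.diagonal (fun i => ((p i : ℝ) : ℂ)) * star U)
    (lam : Fin d → ℂ) :
    ∃ W : Matrix (Fin d) (Fin d) ℂ,
      (∃ V ∈ Matrix.unitaryGroup (Fin d) ℂ, W = V * Matrix.diagonal lam * star V) ∧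
      W * ρ = ρ * W ∧
      IsGreatest {x : ℝ | ∃ V ∈ Matrix.unitaryGroup (Fin d) ℂ,
          x = ‖(V * Matrix.diagonal lam * star V * ρ).trace‖}
        (‖(W * ρ).trace‖) ∧
      (∃ σ : Equiv.Perm (Fin d),
        ‖(W * ρ).trace‖ = ‖∑ i, lam (σ i) * (p i : ℂ)‖ ∧
        ∀ τ : Equiv.Perm (Fin d),
          ‖∑ i, lam (τ i) * (p i : ℂ)‖ ≤ ‖(W * ρ).trace‖) := by
  obtain ⟨U, hU, rfl⟩ := hdiag
  obtain ⟨σ, hσ⟩ := Finite.exists_max fun τ : Perm (Fin d) => ‖∑ i, lam (τ i) * (p i : ℂ)‖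
  set V := U * σ.permMatrix ℂ
  have hV : V ∈ unitaryGroup (Fin d) ℂ := mul_mem hU (permMatrix_mem_unitaryGroup σ)
  have hW : V * diagonal lam * star V = U * diagonal (lam ∘ σ) * star U := by
    rw [← permMatrix_mul_diagonal_mul_star, star_mul]
    simp only [V, mul_assoc]
  refine ⟨V * diagonal lam * star V, ⟨V, hV, rfl⟩, ?_, ⟨⟨V, hV, rfl⟩, ?_⟩, σ, ?_⟩
  · rw [hW]
    exact ((commute_diagonal _ _).unitary_conj hU).eq
  · rintro _ ⟨V', hV', rfl⟩
    rw [hW, trace_conj_diagonal_mul_conj_diagonal hU]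
    exact norm_trace_conj_diagonal_mul_conj_diagonal_le hU hV' lam _ hσ
  · rw [hW, trace_conj_diagonal_mul_conj_diagonal hU]
    exact ⟨rfl, hσ⟩

/-- The maximum of `|Tr(W ρ)|` over unitaries `W` with fixed unimodular spectrum `Λ`
is attained at some `W` commuting with `ρ`, and equals
`max_σ |∑_i λ_{σ(i)} p_i|` where `p` are the eigenvalues of `ρ`. -/
theorem max_abs_trace_fixed_spectrum (d : ℕ) (ρ : Matrix (Fin d) (Fin d) ℂ)
    (hρ : ρ.PosSemidef) (htr : ρ.trace = 1)
    (p : Fin d → ℝ)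
    (hdiag : ∃ U ∈ Matrix.unitaryGroup (Fin d) ℂ,
      ρ = U * Matrix.diagonal (fun i => ((p i : ℝ) : ℂ)) * star U)
    (lam : Fin d → ℂ) (hlam : ∀ i, ‖lam i‖ = 1) :
    ∃ W : Matrix (Fin d) (Fin d) ℂ,
      (∃ V ∈ Matrix.unitaryGroup (Fin d) ℂ, W = V * Matrix.diagonal lam * star V) ∧
      W * ρ = ρ * W ∧
      IsGreatest {x : ℝ | ∃ V ∈ Matrix.unitaryGroup (Fin d) ℂ,
          x = ‖(V * Matrix.diagonal lam * star V * ρ).trace‖}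
        (‖(W * ρ).trace‖) ∧
      (∃ σ : Equiv.Perm (Fin d),
        ‖(W * ρ).trace‖ = ‖∑ i, lam (σ i) * (p i : ℂ)‖ ∧
        ∀ τ : Equiv.Perm (Fin d),
          ‖∑ i, lam (τ i) * (p i : ℂ)‖ ≤ ‖(W * ρ).trace‖) :=
  max_abs_trace_fixed_spectrum_general d ρ p hdiag lam
end

section
/- Monotonicity under local operations: let ρ be a d×d density matrix, let {A_i} be matrices with ∑_i A_i† A_i = I, and set p_i = Tr(A_i ρ A_i†), ρ_i = A_i ρ A_i†/p_i (when p_i > 0). Then for any fixed spectrum Λ of unimodular numbers, ∑_i p_i · max_{W} |Tr(ρ_i W)| ≥ max_{W} |Tr(ρ W)|, where each maximum is over unitaries W with spectrum Λ. -/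
open Matrix
open scoped ComplexOrder

/-!
Write `ρ = r * r` with `r = √ρ` Hermitian and `Bᵢ = Aᵢ * r`. Completeness of the Kraus operators
gives `Tr(ρ W) = ∑ᵢ Tr(Bᵢᴴ Bᵢ W)`. The Hermitian matrices `Bᵢᴴ Bᵢ` and `Bᵢ Bᵢᴴ = Aᵢ ρ Aᵢᴴ = pᵢ ρᵢ`
have the same characteristic polynomial, hence are unitarily conjugate (this replaces the polar
decomposition of `Aᵢ √ρ`); conjugating `W` by that unitary keeps its spectrum, so each term is at
most `pᵢ max_W ‖Tr(ρᵢ W)‖`, and the triangle inequality concludes.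
-/

namespace Matrix

variable {𝕜 : Type*} [RCLike 𝕜] {n : Type*} [Fintype n]

theorem norm_trace_mul_le_of_norm_apply_le {m : Type*} [Fintype m] (M : Matrix n m 𝕜)
    (W : Matrix m n 𝕜) {C : ℝ} (hW : ∀ i j, ‖W i j‖ ≤ C) :
    ‖(M * W).trace‖ ≤ ∑ i, ∑ j, ‖M i j‖ * C := by
  simp only [trace, diag, mul_apply]
  refine (norm_sum_le _ _).trans (Finset.sum_le_sum fun i _ => ?_)
  refine (norm_sum_le _ _).trans (Finset.sum_le_sum fun j _ => ?_)
  rw [norm_mul]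
  exact mul_le_mul_of_nonneg_left (hW j i) (norm_nonneg _)

variable [DecidableEq n]

theorem norm_unitary_conj_diagonal_apply_le {V : Matrix n n 𝕜} (hV : V ∈ unitaryGroup n 𝕜)
    (lam : n → 𝕜) (i j : n) : ‖(V * diagonal lam * star V) i j‖ ≤ ∑ k, ‖lam k‖ := by
  rw [mul_apply]
  refine (norm_sum_le _ _).trans (Finset.sum_le_sum fun k _ => ?_)
  rw [mul_diagonal, star_apply, norm_mul, norm_mul, norm_star]
  have hik := entry_norm_bound_of_unitary hV i k
  have hjk := entry_norm_bound_of_unitary hV j k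
  calc ‖V i k‖ * ‖lam k‖ * ‖V j k‖ ≤ 1 * ‖lam k‖ * 1 := by gcongr
    _ = ‖lam k‖ := by ring

theorem IsHermitian.exists_unitary_eq_conj_of_charpoly_eq {A B : Matrix n n 𝕜}
    (hA : A.IsHermitian) (hB : B.IsHermitian) (h : A.charpoly = B.charpoly) :
    ∃ U ∈ unitaryGroup n 𝕜, A = U * B * star U := by
  have heig := (hA.eigenvalues_eq_eigenvalues_iff hB).2 h
  refine ⟨hA.eigenvectorUnitary * star hB.eigenvectorUnitary,
    (hA.eigenvectorUnitary * star hB.eigenvectorUnitary).2, ?_⟩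
  conv_lhs => rw [hA.spectral_theorem, heig, ← hB.conjStarAlgAut_star_eigenvectorUnitary]
  simp [Unitary.conjStarAlgAut_apply, mul_assoc]

theorem exists_unitary_conjTranspose_mul_self_eq (B : Matrix n n 𝕜) :
    ∃ U ∈ unitaryGroup n 𝕜, Bᴴ * B = U * (B * Bᴴ) * star U :=
  (isHermitian_conjTranspose_mul_self B).exists_unitary_eq_conj_of_charpoly_eq
    (isHermitian_mul_conjTranspose_self B) (charpoly_mul_comm _ _)

/-- `max_W ‖Tr(M W)‖` over `W = V * diagonal lam * star V` with `V` unitary, i.e. over the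
unitaries with spectrum `lam` when `‖lam j‖ = 1`; for a state `M` this is `√F(M)`. -/
noncomputable def maxOverlap (M : Matrix n n 𝕜) (lam : n → 𝕜) : ℝ :=
  sSup {x : ℝ | ∃ V ∈ unitaryGroup n 𝕜, x = ‖(M * (V * diagonal lam * star V)).trace‖}

theorem bddAbove_norm_trace_mul_unitary_conj_diagonal (M : Matrix n n 𝕜) (lam : n → 𝕜) :
    BddAbove {x : ℝ | ∃ V ∈ unitaryGroup n 𝕜, x = ‖(M * (V * diagonal lam * star V)).trace‖} := by
  refine ⟨∑ i, ∑ j, ‖M i j‖ * ∑ k, ‖lam k‖, ?_⟩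
  rintro _ ⟨V, hV, rfl⟩
  exact norm_trace_mul_le_of_norm_apply_le _ _ (norm_unitary_conj_diagonal_apply_le hV lam)

theorem norm_trace_le_maxOverlap (M : Matrix n n 𝕜) (lam : n → 𝕜) {V : Matrix n n 𝕜}
    (hV : V ∈ unitaryGroup n 𝕜) :
    ‖(M * (V * diagonal lam * star V)).trace‖ ≤ maxOverlap M lam :=
  le_csSup (bddAbove_norm_trace_mul_unitary_conj_diagonal M lam) ⟨V, hV, rfl⟩

theorem maxOverlap_le {M : Matrix n n 𝕜} {lam : n → 𝕜} {c : ℝ}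
    (h : ∀ V ∈ unitaryGroup n 𝕜, ‖(M * (V * diagonal lam * star V)).trace‖ ≤ c) :
    maxOverlap M lam ≤ c :=
  csSup_le ⟨_, 1, one_mem _, rfl⟩ (by rintro _ ⟨V, hV, rfl⟩; exact h V hV)

theorem maxOverlap_ofReal_smul_le (M : Matrix n n 𝕜) (lam : n → 𝕜) {c : ℝ} (hc : 0 ≤ c) :
    maxOverlap ((c : 𝕜) • M) lam ≤ c * maxOverlap M lam :=
  maxOverlap_le fun V hV => by
    rw [smul_mul, trace_smul, norm_smul, RCLike.norm_ofReal, abs_of_nonneg hc]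
    exact mul_le_mul_of_nonneg_left (norm_trace_le_maxOverlap M lam hV) hc

theorem norm_trace_conjTranspose_mul_self_mul_le_maxOverlap (B : Matrix n n 𝕜) (lam : n → 𝕜)
    {V : Matrix n n 𝕜} (hV : V ∈ unitaryGroup n 𝕜) :
    ‖(Bᴴ * B * (V * diagonal lam * star V)).trace‖ ≤ maxOverlap (B * Bᴴ) lam := by
  obtain ⟨U, hU, hBU⟩ := exists_unitary_conjTranspose_mul_self_eq B
  have hconj : (Bᴴ * B * (V * diagonal lam * star V)).trace =
      (B * Bᴴ * (star U * V * diagonal lam * star (star U * V))).trace := by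
    rw [hBU, star_mul, star_star]
    simp only [mul_assoc]
    rw [trace_mul_comm U]
    simp only [mul_assoc]
  rw [hconj]
  exact norm_trace_le_maxOverlap _ lam (mul_mem (Unitary.star_mem hU) hV)

theorem maxOverlap_le_sum_maxOverlap_kraus {ι : Type*} [Fintype ι] {ρ : Matrix n n 𝕜}
    (hρ : ρ.PosSemidef) (A : ι → Matrix n n 𝕜) (hA : ∑ i, (A i)ᴴ * A i = 1) (lam : n → 𝕜) :
    maxOverlap ρ lam ≤ ∑ i, maxOverlap (A i * ρ * (A i)ᴴ) lam := by
  obtain ⟨r, hr, hrr⟩ : ∃ r : Matrix n n 𝕜, rᴴ = r ∧ r * r = ρ := by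
    open scoped MatrixOrder in
    exact ⟨CFC.sqrt ρ, (CFC.sqrt_nonneg ρ).posSemidef.1, CFC.sqrt_mul_sqrt_self ρ hρ.nonneg⟩
  have hAρA : ∀ i, A i * ρ * (A i)ᴴ = A i * r * (A i * r)ᴴ := fun i => by
    rw [conjTranspose_mul, hr, ← hrr]; simp only [mul_assoc]
  refine maxOverlap_le fun V hV => ?_
  set W := V * diagonal lam * star V
  have hsplit : (ρ * W).trace = ∑ i, ((A i * r)ᴴ * (A i * r) * W).trace := by
    calc (ρ * W).trace = ((∑ i, (A i)ᴴ * A i) * (r * W * r)).trace := by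
          rw [hA, one_mul, trace_mul_cycle, ← hrr, mul_assoc]
      _ = ∑ i, ((A i * r)ᴴ * (A i * r) * W).trace := by
          simp only [Finset.sum_mul, trace_sum, conjTranspose_mul, hr]
          refine Finset.sum_congr rfl fun i _ => ?_
          rw [show (A i)ᴴ * A i * (r * W * r) = (A i)ᴴ * A i * r * W * r by simp only [mul_assoc],
            trace_mul_comm]
          simp only [mul_assoc]
  calc ‖(ρ * W).trace‖ ≤ ∑ i, ‖((A i * r)ᴴ * (A i * r) * W).trace‖ :=
        hsplit ▸ norm_sum_le _ _
    _ ≤ ∑ i, maxOverlap (A i * ρ * (A i)ᴴ) lam := Finset.sum_le_sum fun i _ => by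
        rw [hAρA]; exact norm_trace_conjTranspose_mul_self_mul_le_maxOverlap _ lam hV

end Matrix

theorem mirror_fidelity_monotone_general (d n : ℕ) (ρ : Matrix (Fin d) (Fin d) ℂ)
    (hρ : ρ.PosSemidef)
    (A : Fin n → Matrix (Fin d) (Fin d) ℂ)
    (hA : ∑ i, star (A i) * A i = 1)
    (p : Fin n → ℝ) (hp : ∀ i, ((p i : ℝ) : ℂ) = (A i * ρ * star (A i)).trace)
    (ρi : Fin n → Matrix (Fin d) (Fin d) ℂ)
    (hρi : ∀ i, ((p i : ℝ) : ℂ) • ρi i = A i * ρ * star (A i))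
    (lam : Fin d → ℂ) :
    sSup {x : ℝ | ∃ V ∈ Matrix.unitaryGroup (Fin d) ℂ,
        x = ‖(ρ * (V * Matrix.diagonal lam * star V)).trace‖} ≤
      ∑ i, p i * sSup {x : ℝ | ∃ V ∈ Matrix.unitaryGroup (Fin d) ℂ,
        x = ‖(ρi i * (V * Matrix.diagonal lam * star V)).trace‖} := by
  simp only [star_eq_conjTranspose] at hA hp hρi
  have hp_nonneg : ∀ i, 0 ≤ p i := fun i => by
    simpa [← hp i] using (hρ.mul_mul_conjTranspose_same (A i)).trace_nonneg
  calc maxOverlap ρ lam ≤ ∑ i, maxOverlap (A i * ρ * (A i)ᴴ) lam :=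
        maxOverlap_le_sum_maxOverlap_kraus hρ A hA lam
    _ = ∑ i, maxOverlap ((p i : ℂ) • ρi i) lam := by simp only [hρi]
    _ ≤ ∑ i, p i * maxOverlap (ρi i) lam :=
        Finset.sum_le_sum fun i _ => maxOverlap_ofReal_smul_le _ lam (hp_nonneg i)

/-- Monotonicity under local operations: for a density matrix `ρ`, Kraus operators with
`∑ Aᵢ†Aᵢ = 1`, outcome probabilities `pᵢ = Tr(Aᵢ ρ Aᵢ†)` and post-measurement states
`ρᵢ` with `pᵢ ρᵢ = Aᵢ ρ Aᵢ†`, the averaged maximal fidelity over unitaries with a fixed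
unimodular spectrum `Λ` does not decrease:
`∑ᵢ pᵢ · max_W |Tr(ρᵢ W)| ≥ max_W |Tr(ρ W)|`. -/
theorem mirror_fidelity_monotone (d n : ℕ) (ρ : Matrix (Fin d) (Fin d) ℂ)
    (hρ : ρ.PosSemidef) (htr : ρ.trace = 1)
    (A : Fin n → Matrix (Fin d) (Fin d) ℂ)
    (hA : ∑ i, star (A i) * A i = 1)
    (p : Fin n → ℝ) (hp : ∀ i, ((p i : ℝ) : ℂ) = (A i * ρ * star (A i)).trace)
    (ρi : Fin n → Matrix (Fin d) (Fin d) ℂ)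
    (hρi : ∀ i, ((p i : ℝ) : ℂ) • ρi i = A i * ρ * star (A i))
    (lam : Fin d → ℂ) (hlam : ∀ j, ‖lam j‖ = 1) :
    sSup {x : ℝ | ∃ V ∈ Matrix.unitaryGroup (Fin d) ℂ,
        x = ‖(ρ * (V * Matrix.diagonal lam * star V)).trace‖} ≤
      ∑ i, p i * sSup {x : ℝ | ∃ V ∈ Matrix.unitaryGroup (Fin d) ℂ,
        x = ‖(ρi i * (V * Matrix.diagonal lam * star V)).trace‖} :=
  mirror_fidelity_monotone_general d n ρ hρ A hA p hp ρi hρi lam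
end

section
/- For any 0 < s ≤ 1 and d ≥ 2, the probability vector q = (1−√(1−s))·(1/d,…,1/d) + √(1−s)·e_1 satisfies 1 − |⟨λ, q_σ⟩|² = s for every permutation σ (where q_σ is σ applied to q, λ_j = e^{2πij/d}), and its linear entropy satisfies 1 − ∑ q_j² = s(d−1)/d. -/
/-
Pairing with the roots of unity annihilates the uniform part of `q`, since the `d`-th roots
of unity sum to zero for `d ≥ 2`; only the spike `√(1−s)·e₁` survives, and it has modulus
`√(1−s)` whatever permutation moves it. The entropy identity is direct algebra with
`√(1−s)² = 1 − s`.
-/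

open Complex Real Finset

theorem IsPrimitiveRoot.sum_fin_pow_succ_eq_zero {R : Type*} [CommRing R] [IsDomain R] {ζ : R}
    {k : ℕ} (h : IsPrimitiveRoot ζ k) (hk : 1 < k) : ∑ j : Fin k, ζ ^ (j.val + 1) = 0 := by
  rw [Fin.sum_univ_eq_sum_range (fun i => ζ ^ (i + 1))]
  simp only [pow_succ, ← sum_mul, h.geom_sum_eq_zero hk, zero_mul]

theorem sum_exp_two_pi_I_mul_succ_div_eq_zero {d : ℕ} (hd : 1 < d) :
    ∑ j : Fin d, exp (2 * π * I * ((j.val : ℝ) + 1) / d) = 0 := by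
  have hpow (j : Fin d) :
      exp (2 * π * I * ((j.val : ℝ) + 1) / d) = exp (2 * π * I / d) ^ (j.val + 1) := by
    rw [← Complex.exp_nat_mul]
    push_cast
    ring_nf
  simp only [hpow]
  exact (isPrimitiveRoot_exp d (by omega)).sum_fin_pow_succ_eq_zero hd

section Spike

variable {ι R : Type*} [Fintype ι] [DecidableEq ι] [CommSemiring R]

theorem sum_mul_const_add_ite_of_sum_eq_zero {μ : ι → R} (hμ : ∑ j, μ j = 0) (c t : R) (i : ι) :
    ∑ j, μ j * (c + if j = i then t else 0) = t * μ i := by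
  simp only [mul_add, sum_add_distrib, ← sum_mul, hμ, zero_mul, zero_add, mul_ite, mul_zero,
    sum_ite_eq', mem_univ, if_true]
  ring

theorem sum_const_add_ite_sq (c t : R) (i : ι) :
    ∑ j, (c + if j = i then t else 0) ^ 2 = Fintype.card ι * c ^ 2 + (2 * c * t + t ^ 2) := by
  have hsq (j : ι) : (c + if j = i then t else 0) ^ 2 =
      c ^ 2 + if j = i then 2 * c * t + t ^ 2 else 0 := by
    split_ifs <;> ring
  simp only [hsq, sum_add_distrib, sum_const, card_univ, nsmul_eq_mul, sum_ite_eq', mem_univ,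
    if_true]

end Spike

theorem interpolating_vector_stellar_value_general (d : ℕ) (hd : 2 ≤ d) (s : ℝ)
    (hs1 : s ≤ 1)
    (q : Fin d → ℝ)
    (hq : ∀ j : Fin d, q j = (1 - Real.sqrt (1 - s)) * (1 / d) +
      (if (j : ℕ) = 0 then Real.sqrt (1 - s) else 0))
    (lam : Fin d → ℂ)
    (hlam : ∀ j : Fin d, lam j = Complex.exp (2 * π * Complex.I * ((j.val : ℝ) + 1) / d)) :
    (∀ σ : Equiv.Perm (Fin d),
      1 - (‖∑ j : Fin d, lam j * (q (σ j) : ℂ)‖) ^ 2 = s) ∧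
    1 - ∑ j, (q j) ^ 2 = s * ((d : ℝ) - 1) / d := by
  have : NeZero d := ⟨by omega⟩
  set t := √(1 - s)
  set c := (1 - t) * (1 / (d : ℝ))
  have ht2 : t ^ 2 = 1 - s := sq_sqrt (by linarith)
  have hq' (j : Fin d) : q j = c + if j = 0 then t else 0 := by
    simp only [hq, Fin.val_eq_zero_iff]
  constructor
  · intro σ
    have hμ : ∑ j, lam (σ.symm j) = 0 := by
      rw [Equiv.sum_comp σ.symm lam, sum_congr rfl fun j _ => hlam j]
      exact sum_exp_two_pi_I_mul_succ_div_eq_zero hd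
    have hpair : ∑ j, lam j * (q (σ j) : ℂ) = t * lam (σ.symm 0) := by
      rw [← Equiv.sum_comp σ.symm, ← sum_mul_const_add_ite_of_sum_eq_zero hμ]
      refine sum_congr rfl fun j _ => ?_
      rw [Equiv.apply_symm_apply, hq']
      split_ifs <;> push_cast <;> rfl
    have hnorm : ‖lam (σ.symm 0)‖ = 1 := by
      rw [hlam, norm_exp]
      simp
    rw [hpair, norm_mul, hnorm, norm_real, norm_of_nonneg (sqrt_nonneg _)]
    linarith
  · have hd0 : (d : ℝ) ≠ 0 := Nat.cast_ne_zero.mpr (by omega)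
    simp only [hq', sum_const_add_ite_sq, Fintype.card_fin, c]
    field_simp
    linear_combination (1 - d) * ht2

/-- The interpolating probability vector
`q = (1−√(1−s))·(1/d,…,1/d) + √(1−s)·e₁` satisfies `1 − |⟨λ, q_σ⟩|² = s` for every
permutation `σ` (with `λ_j = e^{2πij/d}`), and its linear entropy satisfies
`1 − ∑ q_j² = s(d−1)/d`. -/
theorem interpolating_vector_stellar_value (d : ℕ) (hd : 2 ≤ d) (s : ℝ)
    (hs0 : 0 < s) (hs1 : s ≤ 1)
    (q : Fin d → ℝ)
    (hq : ∀ j : Fin d, q j = (1 - Real.sqrt (1 - s)) * (1 / d) +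
      (if (j : ℕ) = 0 then Real.sqrt (1 - s) else 0))
    (lam : Fin d → ℂ)
    (hlam : ∀ j : Fin d, lam j = Complex.exp (2 * π * Complex.I * ((j.val : ℝ) + 1) / d)) :
    (∀ σ : Equiv.Perm (Fin d),
      1 - (‖∑ j : Fin d, lam j * (q (σ j) : ℂ)‖) ^ 2 = s) ∧
    1 - ∑ j, (q j) ^ 2 = s * ((d : ℝ) - 1) / d :=
  interpolating_vector_stellar_value_general d hd s hs1 q hq lam hlam
end
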